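/- arXiv:1507.08390 — 2 statements merged into one kernel-verified Lean document; each statement's English description precedes it below -/
import Mathlib

section
/- Let a ≥ 0, c > 1, and ε > 0. There exists C = C(a, c, ε) such that for all x₁ > 0 and ρ₂ > 0, ∫_{x₁}^∞ (ζ/(ζ+ρ₂))^{-a} · (ρ₂/ζ)^c · exp(-ζ²/ρ₂²) · dζ/ρ₂ ≤ C·( (x₁/ρ₂)^{(1-c-ε)₋} + (x₁/ρ₂)^{(1-a-c-ε)₋} ), where for a real number b, b₋ = min{b, 0}. -/
/-!
In the variable `t = ζ / ρ₂` the integrand is `(t / (t + 1)) ^ (-a) * t ^ (-c) * exp (-t ^ 2) / ρ₂`.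
Since `(t / (t + 1)) ^ (-a) = (1 + t⁻¹) ^ a ≤ 2 ^ a (1 + t ^ (-a))` and `t ^ ε * exp (-t ^ 2)` is
bounded, the integrand is dominated by a multiple of `(t ^ (-(c + ε)) + t ^ (-(a + c + ε))) / ρ₂`,
whose integral over `(x₁, ∞)` is explicit because both exponents are below `-1`.
-/

open MeasureTheory Real Set

lemma exists_exp_neg_sq_le_mul_rpow_neg {ε : ℝ} (hε : 0 < ε) :
    ∃ B > 0, ∀ t > 0, exp (-t ^ 2) ≤ B * t ^ (-ε) := by
  refine ⟨exp (ε * log ε - ε + 1 / 4), exp_pos _, fun t ht => ?_⟩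
  have hlog : log t - log ε ≤ t / ε - 1 := by
    simpa [log_div ht.ne' hε.ne'] using log_le_sub_one_of_pos (div_pos ht hε)
  have hεlog : ε * log t ≤ ε * log ε + t - ε := by
    have := mul_le_mul_of_nonneg_left hlog hε.le
    rw [mul_sub, mul_sub, mul_div_cancel₀ _ hε.ne'] at this
    linarith
  rw [rpow_def_of_pos ht, ← exp_add]
  exact exp_le_exp.2 (by nlinarith [sq_nonneg (t - 1 / 2)])

lemma one_add_rpow_le_two_rpow_mul {a s : ℝ} (ha : 0 ≤ a) (hs : 0 ≤ s) :
    (1 + s) ^ a ≤ 2 ^ a * (1 + s ^ a) := by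
  have h2a : 0 ≤ (2 : ℝ) ^ a := by positivity
  rcases le_total s 1 with hs1 | hs1
  · calc (1 + s) ^ a ≤ 2 ^ a := rpow_le_rpow (by positivity) (by linarith) ha
      _ ≤ 2 ^ a * (1 + s ^ a) := le_mul_of_one_le_right h2a (le_add_of_nonneg_right (by positivity))
  · calc (1 + s) ^ a ≤ (2 * s) ^ a := rpow_le_rpow (by positivity) (by linarith) ha
      _ = 2 ^ a * s ^ a := mul_rpow zero_le_two hs
      _ ≤ 2 ^ a * (1 + s ^ a) := by gcongr; linarith

lemma div_add_one_rpow_neg_le {a t : ℝ} (ha : 0 ≤ a) (ht : 0 < t) :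
    (t / (t + 1)) ^ (-a) ≤ 2 ^ a * (1 + t ^ (-a)) := by
  rw [rpow_neg (by positivity), ← inv_rpow (by positivity), inv_div, add_div, div_self ht.ne',
    rpow_neg ht.le, ← inv_rpow ht.le, one_div]
  exact one_add_rpow_le_two_rpow_mul ha (by positivity)

lemma div_add_one_rpow_neg_mul_rpow_neg_mul_exp_le {a c ε B t : ℝ} (ha : 0 ≤ a) (ht : 0 < t)
    (hB : exp (-t ^ 2) ≤ B * t ^ (-ε)) :
    (t / (t + 1)) ^ (-a) * t ^ (-c) * exp (-t ^ 2) ≤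
      2 ^ a * B * (t ^ (-(c + ε)) + t ^ (-(a + c + ε))) := by
  calc (t / (t + 1)) ^ (-a) * t ^ (-c) * exp (-t ^ 2)
      ≤ 2 ^ a * (1 + t ^ (-a)) * t ^ (-c) * (B * t ^ (-ε)) := by
        gcongr
        exact div_add_one_rpow_neg_le ha ht
    _ = 2 ^ a * B * (t ^ (-(c + ε)) + t ^ (-(a + c + ε))) := by
        rw [neg_add, neg_add, neg_add, rpow_add ht, rpow_add ht, rpow_add ht]
        ring

lemma integral_Ioi_div_rpow_neg_div {q : ℝ} (hq : 1 < q) {x ρ : ℝ} (hx : 0 < x) (hρ : 0 < ρ) :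
    ∫ ζ in Ioi x, (ζ / ρ) ^ (-q) / ρ = (x / ρ) ^ (1 - q) / (q - 1) := by
  have h := integral_comp_mul_left_Ioi (fun t => t ^ (-q)) x (inv_pos.2 hρ)
  simp only [smul_eq_mul, inv_inv] at h
  simp_rw [div_eq_inv_mul _ ρ, integral_const_mul, h, ← div_eq_inv_mul x ρ,
    integral_Ioi_rpow_of_lt (by linarith : -q < -1) (div_pos hx hρ)]
  rw [inv_mul_cancel_left₀ hρ.ne', neg_add_eq_sub, ← neg_sub q 1, div_neg, neg_div, neg_neg]

lemma integrableOn_Ioi_div_rpow_neg_div {q : ℝ} (hq : 1 < q) {x ρ : ℝ} (hx : 0 < x)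
    (hρ : 0 < ρ) : IntegrableOn (fun ζ => (ζ / ρ) ^ (-q) / ρ) (Ioi x) := by
  -- a non-integrable function would have integral `0`
  refine Integrable.of_integral_ne_zero ?_
  rw [integral_Ioi_div_rpow_neg_div hq hx hρ]
  have : 0 < q - 1 := by linarith
  positivity

lemma div_add_rpow_neg_mul_div_rpow_mul_exp_div_le {a c ε B ζ ρ : ℝ} (ha : 0 ≤ a) (hζ : 0 < ζ)
    (hρ : 0 < ρ) (hB : ∀ t > 0, exp (-t ^ 2) ≤ B * t ^ (-ε)) :
    (ζ / (ζ + ρ)) ^ (-a) * (ρ / ζ) ^ c * exp (-ζ ^ 2 / ρ ^ 2) / ρ ≤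
      2 ^ a * B * ((ζ / ρ) ^ (-(c + ε)) / ρ + (ζ / ρ) ^ (-(a + c + ε)) / ρ) := by
  have ht : 0 < ζ / ρ := div_pos hζ hρ
  have h1 : ζ / (ζ + ρ) = ζ / ρ / (ζ / ρ + 1) := by field_simp
  have h2 : (ρ / ζ) ^ c = (ζ / ρ) ^ (-c) := by rw [rpow_neg ht.le, ← inv_rpow ht.le, inv_div]
  have h3 : -ζ ^ 2 / ρ ^ 2 = -(ζ / ρ) ^ 2 := by ring
  rw [h1, h2, h3, ← add_div, ← mul_div_assoc]
  exact div_le_div_of_nonneg_right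
    (div_add_one_rpow_neg_mul_rpow_neg_mul_exp_le ha ht (hB _ ht)) hρ.le

theorem stmt_12 (a c ε : ℝ) (ha : 0 ≤ a) (hc : 1 < c) (hε : 0 < ε) :
    ∃ C > 0, ∀ (x₁ ρ₂ : ℝ), 0 < x₁ → 0 < ρ₂ →
      (∫ ζ in Set.Ioi x₁,
          (ζ / (ζ + ρ₂)) ^ (-a) * (ρ₂ / ζ) ^ c * Real.exp (-ζ ^ 2 / ρ₂ ^ 2) / ρ₂) ≤
        C * ((x₁ / ρ₂) ^ min (1 - c - ε) 0 + (x₁ / ρ₂) ^ min (1 - a - c - ε) 0) := by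
  obtain ⟨B, hB, hexp⟩ := exists_exp_neg_sq_le_mul_rpow_neg hε
  have hcε : 0 < c + ε - 1 := by linarith
  have hc' : 1 < c + ε := by linarith
  have hac' : 1 < a + c + ε := by linarith
  refine ⟨2 ^ a * B / (c + ε - 1), by positivity, fun x ρ hx hρ => ?_⟩
  have hint₁ := integrableOn_Ioi_div_rpow_neg_div hc' hx hρ
  have hint₂ := integrableOn_Ioi_div_rpow_neg_div hac' hx hρ
  calc _ ≤ ∫ ζ in Ioi x,
        2 ^ a * B * ((ζ / ρ) ^ (-(c + ε)) / ρ + (ζ / ρ) ^ (-(a + c + ε)) / ρ) := by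
        refine setIntegral_mono_of_nonneg (fun ζ hζ => ?_)
          (fun ζ hζ => div_add_rpow_neg_mul_div_rpow_mul_exp_div_le ha (hx.trans hζ) hρ hexp)
          ((hint₁.add hint₂).const_mul _)
        have hζ0 : 0 < ζ := hx.trans hζ
        positivity
    _ = 2 ^ a * B * ((x / ρ) ^ (1 - (c + ε)) / (c + ε - 1)
          + (x / ρ) ^ (1 - (a + c + ε)) / (a + c + ε - 1)) := by
        rw [integral_const_mul, integral_add hint₁ hint₂,
          integral_Ioi_div_rpow_neg_div hc' hx hρ, integral_Ioi_div_rpow_neg_div hac' hx hρ]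
    _ ≤ 2 ^ a * B * ((x / ρ) ^ (1 - c - ε) / (c + ε - 1)
          + (x / ρ) ^ (1 - a - c - ε) / (c + ε - 1)) := by
        rw [sub_add_eq_sub_sub, sub_add_eq_sub_sub, sub_add_eq_sub_sub]
        gcongr
        linarith
    _ = _ := by
        rw [min_eq_left (by linarith), min_eq_left (by linarith)]
        ring
end

section
/- Let σ > 0 and r = min{|μ|, 1} for μ ≠ 0. There exist constants C, depending on μ, σ, n, such that for all x, y ∈ ℝⁿ (with x', y' denoting the first m coordinates, both nonzero) and t > s: |(|x'|^μ/|y'|^μ − 1)| · (t−s)^{−(n+2)/2} · exp(−σ|x−y|²/(t−s)) ≤ C · |x'|^{−r} · Φ(|x'|/|y'|) · (t−s)^{−(n+2−r)/2} · exp(−σ|x−y|²/(2(t−s))), where Φ(t) = t^μ + t if μ > 1, t^μ if 0 < μ ≤ 1, 1 if −1 ≤ μ < 0, and t^{μ+1} + 1 if μ < −1. -/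
/-!
With `t = |x'| / |y'|` the quotient is `t^μ - 1`. For `0 < μ ≤ 1`, `t ↦ t^μ` is `μ`-Hölder
(by `(a + b)^μ ≤ a^μ + b^μ`); for `μ ≥ 1` convexity (Bernoulli) gives
`|t^μ - 1| ≤ μ (t^(μ-1) + 1) |t - 1|`; negative `μ` reduce to `-μ` via `t^μ - 1 = t^μ (1 - t^(-μ))`.
Together, `|t^μ - 1| ≤ max(|μ|, 1) t^(-r) Φ(t) |t - 1|^r`, and `|t - 1|^r = | |x'| - |y'| |^r / |y'|^r`.
Finally `| |x'| - |y'| |^r ≤ |x - y|^r` is absorbed by half of the Gaussian at the cost of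
`(t - s)^(r/2)`, because `v^(r/2) e^(-σv/2)` is bounded by `1 + 2/σ`.
-/

/-- The function Φ from the paper, defined piecewise according to μ. -/
noncomputable def Phi (μ t : ℝ) : ℝ :=
  if 1 < μ then t ^ μ + t
  else if 0 < μ then t ^ μ
  else if -1 ≤ μ then 1
  else t ^ (μ + 1) + 1

open Real

lemma abs_rpow_sub_rpow_le_abs_sub_rpow {α a b : ℝ} (ha : 0 ≤ a) (hb : 0 ≤ b) (hα0 : 0 ≤ α)
    (hα1 : α ≤ 1) : |a ^ α - b ^ α| ≤ |a - b| ^ α := by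
  wlog hab : b ≤ a generalizing a b
  · rw [abs_sub_comm, abs_sub_comm a]
    exact this hb ha (le_of_not_ge hab)
  have h := rpow_add_le_add_rpow (sub_nonneg.2 hab) hb hα0 hα1
  rw [sub_add_cancel] at h
  rw [abs_of_nonneg (sub_nonneg.2 (rpow_le_rpow hb hab hα0)), abs_of_nonneg (sub_nonneg.2 hab)]
  linarith

lemma rpow_sub_rpow_le_mul_rpow_sub_one_mul {α a b : ℝ} (hα : 1 ≤ α) (ha : 0 < a) (hb : 0 ≤ b) :
    a ^ α - b ^ α ≤ α * a ^ (α - 1) * (a - b) := by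
  have hs : -1 ≤ b / a - 1 := by linarith [div_nonneg hb ha.le]
  have h := one_add_mul_self_le_rpow_one_add hs hα
  rw [add_sub_cancel, div_rpow hb ha.le, le_div_iff₀ (rpow_pos_of_pos ha α)] at h
  have e : α * a ^ (α - 1) * (a - b) = -(α * a ^ α * (b / a - 1)) := by
    rw [rpow_sub_one ha.ne']; field_simp; ring
  linarith

lemma abs_rpow_sub_one_le_of_one_le {α t : ℝ} (hα : 1 ≤ α) (ht : 0 < t) :
    |t ^ α - 1| ≤ α * (t ^ (α - 1) + 1) * |t - 1| := by
  rcases le_total 1 t with h | h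
  · have h' := rpow_sub_rpow_le_mul_rpow_sub_one_mul hα ht zero_le_one
    rw [one_rpow] at h'
    rw [abs_of_nonneg (sub_nonneg.2 (one_le_rpow h (by linarith))), abs_of_nonneg (sub_nonneg.2 h)]
    nlinarith [mul_nonneg (by linarith : (0:ℝ) ≤ α) (sub_nonneg.2 h)]
  · have h' := rpow_sub_rpow_le_mul_rpow_sub_one_mul hα one_pos ht.le
    simp only [one_rpow, mul_one] at h'
    rw [abs_of_nonpos (sub_nonpos.2 (rpow_le_one ht.le h (by linarith))),
      abs_of_nonpos (sub_nonpos.2 h)]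
    nlinarith [rpow_pos_of_pos ht (α - 1), mul_nonneg (by linarith : (0:ℝ) ≤ α) (sub_nonneg.2 h)]

lemma Phi_pos {μ t : ℝ} (ht : 0 < t) : 0 < Phi μ t := by
  unfold Phi
  split_ifs <;> positivity

lemma rpow_neg_mul_Phi {ν t : ℝ} (hν : 0 < ν) (ht : 0 < t) : t ^ (-ν) * Phi ν t = Phi (-ν) t := by
  have hcancel : t ^ (-ν) * t ^ ν = 1 := by rw [← rpow_add ht, neg_add_cancel, rpow_zero]
  rcases le_or_gt ν 1 with h1 | h1
  · rw [Phi, Phi, if_neg h1.not_gt, if_pos hν, if_neg (by linarith), if_neg (by linarith),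
      if_pos (by linarith), hcancel]
  · rw [Phi, Phi, if_pos h1, if_neg (by linarith), if_neg (by linarith), if_neg (by linarith),
      mul_add, hcancel, rpow_add ht, rpow_one]
    ring

lemma abs_rpow_sub_one_eq_rpow_mul {μ t : ℝ} (ht : 0 < t) :
    |t ^ μ - 1| = t ^ μ * |t ^ (-μ) - 1| := by
  calc |t ^ μ - 1| = |t ^ μ * (1 - t ^ (-μ))| := by
        rw [mul_sub, mul_one, ← rpow_add ht, add_neg_cancel, rpow_zero]
    _ = t ^ μ * |t ^ (-μ) - 1| := by rw [abs_mul, abs_of_pos (rpow_pos_of_pos ht μ), abs_sub_comm]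

lemma abs_rpow_sub_one_le_of_pos {μ t : ℝ} (hμ : 0 < μ) (ht : 0 < t) :
    |t ^ μ - 1| ≤ max μ 1 * t ^ (-min μ 1) * Phi μ t * |t - 1| ^ min μ 1 := by
  rcases le_or_gt μ 1 with h1 | h1
  · rw [max_eq_right h1, min_eq_left h1, Phi, if_neg h1.not_gt, if_pos hμ, one_mul,
      ← rpow_add ht, neg_add_cancel, rpow_zero, one_mul]
    simpa using abs_rpow_sub_rpow_le_abs_sub_rpow ht.le zero_le_one hμ.le h1
  · rw [max_eq_left h1.le, min_eq_right h1.le, Phi, if_pos h1, rpow_one, rpow_neg_one,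
      mul_assoc μ]
    have e : t⁻¹ * (t ^ μ + t) = t ^ (μ - 1) + 1 := by rw [rpow_sub_one ht.ne']; field_simp
    rw [e]
    exact abs_rpow_sub_one_le_of_one_le h1.le ht

lemma abs_rpow_sub_one_le_Phi {μ t : ℝ} (hμ : μ ≠ 0) (ht : 0 < t) :
    |t ^ μ - 1| ≤ max |μ| 1 * t ^ (-min |μ| 1) * Phi μ t * |t - 1| ^ min |μ| 1 := by
  rcases hμ.lt_or_gt with hneg | hpos
  · have h := abs_rpow_sub_one_le_of_pos (neg_pos.2 hneg) ht
    have e := rpow_neg_mul_Phi (neg_pos.2 hneg) ht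
    rw [neg_neg] at e
    rw [abs_of_neg hneg, abs_rpow_sub_one_eq_rpow_mul ht, ← e]
    calc t ^ μ * |t ^ (-μ) - 1|
        ≤ t ^ μ * (max (-μ) 1 * t ^ (-min (-μ) 1) * Phi (-μ) t * |t - 1| ^ min (-μ) 1) :=
          mul_le_mul_of_nonneg_left h (rpow_nonneg ht.le μ)
      _ = _ := by ring
  · rw [abs_of_pos hpos]
    exact abs_rpow_sub_one_le_of_pos hpos ht

lemma abs_rpow_div_rpow_sub_one_le_Phi {μ a b : ℝ} (hμ : μ ≠ 0) (ha : 0 < a) (hb : 0 < b) :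
    |a ^ μ / b ^ μ - 1| ≤
      max |μ| 1 * a ^ (-min |μ| 1) * Phi μ (a / b) * |a - b| ^ min |μ| 1 := by
  set r := min |μ| 1
  have e : (a / b) ^ (-r) * |a / b - 1| ^ r = a ^ (-r) * |a - b| ^ r := by
    have hbr := rpow_pos_of_pos hb r
    rw [div_sub_one hb.ne', abs_div, abs_of_pos hb, div_rpow ha.le hb.le,
      div_rpow (abs_nonneg _) hb.le, rpow_neg hb.le]
    field_simp
  rw [← div_rpow ha.le hb.le]
  calc |(a / b) ^ μ - 1| ≤ max |μ| 1 * (a / b) ^ (-r) * Phi μ (a / b) * |a / b - 1| ^ r :=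
        abs_rpow_sub_one_le_Phi hμ (div_pos ha hb)
    _ = _ := by linear_combination (max |μ| 1 * Phi μ (a / b)) * e

lemma rpow_mul_exp_neg_le {σ p v : ℝ} (hσ : 0 < σ) (hp0 : 0 ≤ p) (hp1 : p ≤ 1) (hv : 0 ≤ v) :
    v ^ p * exp (-(σ * v / 2)) ≤ 1 + 2 / σ := by
  have hpow : v ^ p ≤ 1 + v := by
    rcases le_total v 1 with h | h
    · linarith [rpow_le_one hv h hp0]
    · have := rpow_le_rpow_of_exponent_le h hp1
      rw [rpow_one] at this
      linarith
  have hE : exp (-(σ * v / 2)) ≤ 1 := exp_le_one_iff.2 (by nlinarith)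
  have hvE : σ * v / 2 * exp (-(σ * v / 2)) ≤ 1 :=
    (mul_exp_neg_le_exp_neg_one _).trans (exp_le_one_iff.2 (by norm_num))
  calc v ^ p * exp (-(σ * v / 2)) ≤ (1 + v) * exp (-(σ * v / 2)) := by gcongr
    _ = exp (-(σ * v / 2)) + 2 / σ * (σ * v / 2 * exp (-(σ * v / 2))) := by field_simp
    _ ≤ 1 + 2 / σ * 1 := by gcongr
    _ = 1 + 2 / σ := by ring

lemma rpow_mul_rpow_mul_exp_le_mul_exp_half {σ r δ d τ q : ℝ} (hσ : 0 < σ) (hr0 : 0 ≤ r) (hr1 : r ≤ 1)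
    (hδ : 0 ≤ δ) (hδd : δ ^ 2 ≤ d) (hτ : 0 < τ) :
    δ ^ r * τ ^ (-q / 2) * exp (-σ * d / τ) ≤
      (1 + 2 / σ) * τ ^ (-(q - r) / 2) * exp (-σ * d / (2 * τ)) := by
  have hd : 0 ≤ d := (sq_nonneg δ).trans hδd
  have hδr : δ ^ r ≤ d ^ (r / 2) :=
    calc δ ^ r = (δ ^ 2) ^ (r / 2) := by
          rw [← rpow_natCast, ← rpow_mul hδ]; congr 1; push_cast; ring
      _ ≤ d ^ (r / 2) := rpow_le_rpow (sq_nonneg δ) hδd (by positivity)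
  have hτsplit : d ^ (r / 2) * τ ^ (-q / 2) = (d / τ) ^ (r / 2) * τ ^ (-(q - r) / 2) := by
    rw [div_rpow hd hτ.le, show -q / 2 = -(q - r) / 2 + -(r / 2) by ring, rpow_add hτ,
      rpow_neg hτ.le]
    ring
  have hexp : exp (-σ * d / τ) = exp (-(σ * (d / τ) / 2)) * exp (-σ * d / (2 * τ)) := by
    rw [← exp_add]; congr 1; field_simp; ring
  calc δ ^ r * τ ^ (-q / 2) * exp (-σ * d / τ) ≤ d ^ (r / 2) * τ ^ (-q / 2) * exp (-σ * d / τ) := by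
        gcongr
    _ = ((d / τ) ^ (r / 2) * exp (-(σ * (d / τ) / 2))) *
          (τ ^ (-(q - r) / 2) * exp (-σ * d / (2 * τ))) := by rw [hτsplit, hexp]; ring
    _ ≤ (1 + 2 / σ) * (τ ^ (-(q - r) / 2) * exp (-σ * d / (2 * τ))) := by
        gcongr
        exact rpow_mul_exp_neg_le hσ (by positivity) (by linarith) (div_nonneg hd hτ.le)
    _ = _ := by ring

theorem stmt_14_general (n m : ℕ) (σ μ : ℝ) (hσ : 0 < σ) (hμ : μ ≠ 0) :
    ∃ C > 0, ∀ (x' y' : EuclideanSpace ℝ (Fin m))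
      (x'' y'' : EuclideanSpace ℝ (Fin (n - m))) (t s : ℝ),
      s < t → x' ≠ 0 → y' ≠ 0 →
      |‖x'‖ ^ μ / ‖y'‖ ^ μ - 1| * (t - s) ^ (-((n : ℝ) + 2) / 2) *
          Real.exp (-σ * (‖x' - y'‖ ^ 2 + ‖x'' - y''‖ ^ 2) / (t - s)) ≤
        C * ‖x'‖ ^ (-(min |μ| 1)) * Phi μ (‖x'‖ / ‖y'‖) *
          (t - s) ^ (-((n : ℝ) + 2 - min |μ| 1) / 2) *
          Real.exp (-σ * (‖x' - y'‖ ^ 2 + ‖x'' - y''‖ ^ 2) / (2 * (t - s))) := by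
  refine ⟨max |μ| 1 * (1 + 2 / σ), by positivity, ?_⟩
  intro x' y' x'' y'' t s hst hx hy
  have ha := norm_pos_iff.2 hx
  have hb := norm_pos_iff.2 hy
  have hδd : |‖x'‖ - ‖y'‖| ^ 2 ≤ ‖x' - y'‖ ^ 2 + ‖x'' - y''‖ ^ 2 := by
    have := pow_le_pow_left₀ (abs_nonneg _) (abs_norm_sub_norm_le x' y') 2
    linarith [sq_nonneg ‖x'' - y''‖]
  have hratio := abs_rpow_div_rpow_sub_one_le_Phi hμ ha hb
  have hheat := rpow_mul_rpow_mul_exp_le_mul_exp_half (q := (n : ℝ) + 2) hσ (by positivity)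
    (min_le_right |μ| 1) (abs_nonneg _) hδd (sub_pos.2 hst)
  set K := max |μ| 1 * ‖x'‖ ^ (-min |μ| 1) * Phi μ (‖x'‖ / ‖y'‖)
  have hK : 0 ≤ K := by have := Phi_pos (μ := μ) (div_pos ha hb); positivity
  calc _ ≤ K * |‖x'‖ - ‖y'‖| ^ min |μ| 1 * (t - s) ^ (-((n : ℝ) + 2) / 2) *
          exp (-σ * (‖x' - y'‖ ^ 2 + ‖x'' - y''‖ ^ 2) / (t - s)) := by gcongr
    _ = K * (|‖x'‖ - ‖y'‖| ^ min |μ| 1 * (t - s) ^ (-((n : ℝ) + 2) / 2) *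
          exp (-σ * (‖x' - y'‖ ^ 2 + ‖x'' - y''‖ ^ 2) / (t - s))) := by ring
    _ ≤ _ := (mul_le_mul_of_nonneg_left hheat hK).trans_eq (by ring)

theorem stmt_14 (n m : ℕ) (hm : m ≤ n) (σ μ : ℝ) (hσ : 0 < σ) (hμ : μ ≠ 0) :
    ∃ C > 0, ∀ (x' y' : EuclideanSpace ℝ (Fin m))
      (x'' y'' : EuclideanSpace ℝ (Fin (n - m))) (t s : ℝ),
      s < t → x' ≠ 0 → y' ≠ 0 →
      |‖x'‖ ^ μ / ‖y'‖ ^ μ - 1| * (t - s) ^ (-((n : ℝ) + 2) / 2) *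
          Real.exp (-σ * (‖x' - y'‖ ^ 2 + ‖x'' - y''‖ ^ 2) / (t - s)) ≤
        C * ‖x'‖ ^ (-(min |μ| 1)) * Phi μ (‖x'‖ / ‖y'‖) *
          (t - s) ^ (-((n : ℝ) + 2 - min |μ| 1) / 2) *
          Real.exp (-σ * (‖x' - y'‖ ^ 2 + ‖x'' - y''‖ ^ 2) / (2 * (t - s))) :=
  stmt_14_general n m σ μ hσ hμ
end
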